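/- For n ≥ 1 and 0 ≤ k ≤ n-1, the number of properly-marked {L,R}-words of length n-1 with exactly k marked L-elements equals the number of Kimberling paths from (0,0) to (n-k, k), and both equal ∑_{r=0}^{n-k-1} C(n-k-1, r) · C(r+k, r). -/

import Mathlib

/-- The alphabet {Lᵘ, Lᵐ, R} for properly-marked {L,R}-words. -/
inductive PMLetter
  | Lu : PMLetter
  | Lm : PMLetter
  | R : PMLetter
deriving DecidableEq

/-- A word is properly marked if no occurrence of Lᵐ is immediately followed by R. -/
def ProperlyMarked (w : List PMLetter) : Prop :=
  w.Chain' (fun a b => a = PMLetter.Lm → b ≠ PMLetter.R)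

def pathEnd (l : List (ℕ × ℕ)) : ℕ × ℕ := ((l.map Prod.fst).sum, (l.map Prod.snd).sum)

/-- Kimberling paths from (0,0) to (i,j): each step has strictly positive first coordinate. -/
def Kimb (i j : ℕ) : Set (List (ℕ × ℕ)) :=
  {l | (∀ s ∈ l, 1 ≤ s.1) ∧ pathEnd l = (i, j)}

/-!
Cutting a properly-marked word at its letters `Lᵘ` leaves blocks of the form `Rᶜ (Lᵐ)ᵇ`, since no
`Lᵐ` may precede an `R`; sending such a block to the step `(c + 1, b)` is a bijection between
properly-marked words with `k` marked and `d` other letters and Kimberling paths to `(d + 1, k)`.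
Counting paths by their first step gives a recurrence that `∑ r, C(d, r) C(r + k, r)` satisfies by
Pascal's rule and the hockey-stick identity.
-/

open Finset

theorem sum_range_succ_choose_smul {M : Type*} [AddCommMonoid M] (f : ℕ → M) (d : ℕ) :
    ∑ r ∈ range (d + 2), (d + 1).choose r • f r =
      ∑ r ∈ range (d + 1), d.choose r • (f r + f (r + 1)) := by
  have shifted : ∑ r ∈ range (d + 1), d.choose (r + 1) • f (r + 1) + f 0 =
      ∑ r ∈ range (d + 1), d.choose r • f r := by
    have h := sum_range_succ' (fun r => d.choose r • f r) (d + 1)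
    rw [sum_range_succ, Nat.choose_succ_self, zero_smul, add_zero] at h
    simpa using h.symm
  rw [sum_range_succ', Nat.choose_zero_right, one_smul]
  simp only [Nat.choose_succ_succ, add_smul, smul_add, sum_add_distrib]
  rw [add_assoc, shifted, add_comm]

def kimberlingSum (d k : ℕ) : ℕ := ∑ r ∈ range (d + 1), d.choose r * (r + k).choose r

theorem kimberlingSum_zero_left (k : ℕ) : kimberlingSum 0 k = 1 := by
  simp [kimberlingSum]

theorem kimberlingSum_succ (d k : ℕ) :
    kimberlingSum (d + 1) k = kimberlingSum d k + ∑ b ∈ range (k + 1), kimberlingSum d b := by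
  have hockey (r : ℕ) : (r + 1 + k).choose (r + 1) = ∑ b ∈ range (k + 1), (r + b).choose r := by
    rw [show r + 1 + k = k + r + 1 by ring, ← Nat.sum_range_add_choose]
    exact sum_congr rfl fun b _ => by rw [add_comm]
  simp only [kimberlingSum, ← smul_eq_mul]
  rw [sum_range_succ_choose_smul (fun r => (r + k).choose r), sum_comm]
  simp only [smul_add, sum_add_distrib, hockey, smul_sum]

theorem kimberlingSum_eq_one_add_sum (d k : ℕ) :
    kimberlingSum d k = 1 + ∑ a ∈ range d, ∑ b ∈ range (k + 1), kimberlingSum a b := by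
  induction d with
  | zero => simp [kimberlingSum_zero_left]
  | succ d ih =>
    rw [kimberlingSum_succ, sum_range_succ (fun a => ∑ b ∈ range (k + 1), kimberlingSum a b), ih]
    ring

theorem pathEnd_cons (s : ℕ × ℕ) (l : List (ℕ × ℕ)) : pathEnd (s :: l) = s + pathEnd l := by
  ext <;> simp [pathEnd]

theorem nil_mem_Kimb {i j : ℕ} : [] ∈ Kimb i j ↔ i = 0 ∧ j = 0 := by
  simp [Kimb, pathEnd, eq_comm]

theorem cons_mem_Kimb {i j : ℕ} {s : ℕ × ℕ} {l : List (ℕ × ℕ)} :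
    s :: l ∈ Kimb i j ↔ 1 ≤ s.1 ∧ s.1 ≤ i ∧ s.2 ≤ j ∧ l ∈ Kimb (i - s.1) (j - s.2) := by
  simp only [Kimb, Set.mem_ofPred_eq, List.forall_mem_cons, pathEnd_cons, Prod.ext_iff,
    Prod.fst_add, Prod.snd_add]
  constructor
  · rintro ⟨⟨hs, hl⟩, hi, hj⟩
    exact ⟨hs, by omega, by omega, hl, by omega, by omega⟩
  · rintro ⟨hs, hi, hj, hl, hi', hj'⟩
    exact ⟨⟨hs, hl⟩, by omega, by omega⟩

def kimberlingPaths : ℕ → ℕ → Finset (List (ℕ × ℕ))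
  | 0, 0 => {[]}
  | 0, _ + 1 => ∅
  | i + 1, j => (range (i + 1) ×ˢ range (j + 1)).biUnion fun p =>
      (kimberlingPaths (i - p.1) (j - p.2)).image (List.cons (p.1 + 1, p.2))

theorem coe_kimberlingPaths (i j : ℕ) :
    (kimberlingPaths i j : Set (List (ℕ × ℕ))) = Kimb i j := by
  induction i using Nat.strong_induction_on generalizing j with
  | _ i ih =>
    ext l
    match i, j, l with
    | 0, j, l =>
      cases j <;> cases l <;> simp [kimberlingPaths, nil_mem_Kimb, cons_mem_Kimb] <;> omega
    | i + 1, j, [] => simp [kimberlingPaths, nil_mem_Kimb]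
    | i + 1, j, (a, b) :: l =>
      simp only [kimberlingPaths, coe_biUnion, coe_product, coe_range, coe_image, Set.mem_iUnion,
        Set.mem_image, List.cons.injEq, Prod.mk.injEq, cons_mem_Kimb]
      constructor
      · rintro ⟨⟨a, b⟩, ⟨ha, hb⟩, t, ht, ⟨rfl, rfl⟩, rfl⟩
        rw [ih _ (by omega)] at ht
        simp only [Set.mem_Iio] at ha hb
        exact ⟨by omega, by omega, by omega, by simpa using ht⟩
      · rintro ⟨ha, hai, hb, hl⟩
        refine ⟨(a - 1, b), ⟨by simp; omega, by simp; omega⟩, l, ?_, ⟨by omega, rfl⟩, rfl⟩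
        rw [ih _ (by omega)]
        convert hl using 2
        omega

theorem card_kimberlingPaths_succ (i j : ℕ) : #(kimberlingPaths (i + 1) j) =
    ∑ a ∈ range (i + 1), ∑ b ∈ range (j + 1), #(kimberlingPaths a b) := by
  rw [kimberlingPaths, card_biUnion, sum_product]
  · simp only [card_image_of_injective _ List.cons_injective]
    rw [← sum_range_reflect (fun a => ∑ b ∈ range (j + 1), #(kimberlingPaths a b))]
    refine sum_congr rfl fun a _ => ?_
    rw [Nat.add_sub_cancel, ← sum_range_reflect (fun b => #(kimberlingPaths (i - a) b))]
    simp
  · rintro p - q - hpq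
    simp only [Function.onFun, disjoint_left, mem_image]
    rintro _ ⟨t, -, rfl⟩ ⟨t', -, h⟩
    simp only [List.cons.injEq, Prod.mk.injEq] at h
    exact hpq (Prod.ext (by omega) h.1.2.symm)

theorem card_kimberlingPaths_zero_left (j : ℕ) :
    #(kimberlingPaths 0 j) = if j = 0 then 1 else 0 := by
  cases j <;> simp [kimberlingPaths]

theorem card_kimberlingPaths (d k : ℕ) : #(kimberlingPaths (d + 1) k) = kimberlingSum d k := by
  induction d using Nat.strong_induction_on generalizing k with
  | _ d ih =>
    rw [card_kimberlingPaths_succ, sum_range_succ', kimberlingSum_eq_one_add_sum, add_comm]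
    simp only [card_kimberlingPaths_zero_left, sum_ite_eq', mem_range, Nat.succ_pos, if_true]
    congr 1
    exact sum_congr rfl fun a ha => sum_congr rfl fun b _ => ih a (mem_range.mp ha) b

theorem ncard_Kimb (d k : ℕ) : (Kimb (d + 1) k).ncard = kimberlingSum d k := by
  rw [← coe_kimberlingPaths, Set.ncard_coe_finset, card_kimberlingPaths]

theorem properlyMarked_nil : ProperlyMarked [] := List.IsChain.nil

theorem properlyMarked_cons {x : PMLetter} {w : List PMLetter} :
    ProperlyMarked (x :: w) ↔ (x = .Lm → w.head? ≠ some .R) ∧ ProperlyMarked w := by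
  change List.IsChain _ (x :: w) ↔ _ ∧ List.IsChain _ w
  rw [List.isChain_cons]
  cases w <;> simp

theorem properlyMarked_replicate_R_append {w : List PMLetter} (hw : ProperlyMarked w) (c : ℕ) :
    ProperlyMarked (List.replicate c .R ++ w) := by
  induction c with
  | zero => exact hw
  | succ c ih => exact properlyMarked_cons.2 ⟨by simp, ih⟩

theorem properlyMarked_replicate_Lm_append {w : List PMLetter} (hw : ProperlyMarked w)
    (hR : w.head? ≠ some .R) (b : ℕ) : ProperlyMarked (List.replicate b .Lm ++ w) := by
  induction b with
  | zero => exact hw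
  | succ b ih =>
    exact properlyMarked_cons.2 ⟨fun _ => by cases b <;> simp [List.replicate_succ, hR], ih⟩

def stepToWord (s : ℕ × ℕ) : List PMLetter :=
  List.replicate (s.1 - 1) .R ++ List.replicate s.2 .Lm

theorem properlyMarked_stepToWord_append (s : ℕ × ℕ) {w : List PMLetter} (hw : ProperlyMarked w)
    (hR : w.head? ≠ some .R) : ProperlyMarked (stepToWord s ++ w) := by
  rw [stepToWord, List.append_assoc]
  exact properlyMarked_replicate_R_append (properlyMarked_replicate_Lm_append hw hR _) _

def pathToWord : List (ℕ × ℕ) → List PMLetter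
  | [] => []
  | [s] => stepToWord s
  | s :: t :: l => stepToWord s ++ .Lu :: pathToWord (t :: l)

theorem properlyMarked_pathToWord : ∀ l, ProperlyMarked (pathToWord l)
  | [] => properlyMarked_nil
  | [s] => by
    simpa [pathToWord] using properlyMarked_stepToWord_append s properlyMarked_nil (by simp)
  | s :: t :: l => properlyMarked_stepToWord_append s
      (properlyMarked_cons.2 ⟨by simp, properlyMarked_pathToWord (t :: l)⟩) (by simp)

theorem pathToWord_cons_of_stepToWord_eq {s s' : ℕ × ℕ} {x : PMLetter}
    (h : stepToWord s' = x :: stepToWord s) (l : List (ℕ × ℕ)) :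
    pathToWord (s' :: l) = x :: pathToWord (s :: l) := by
  cases l <;> simp only [pathToWord, h, List.cons_append]

theorem stepToWord_add_R {s : ℕ × ℕ} (hs : 1 ≤ s.1) :
    stepToWord ((1, 0) + s) = .R :: stepToWord s := by
  rw [stepToWord, stepToWord, Prod.fst_add, Prod.snd_add,
    show 1 + s.1 - 1 = s.1 - 1 + 1 by omega]
  simp [List.replicate_succ]

theorem stepToWord_add_Lm (b : ℕ) : stepToWord ((0, 1) + (1, b)) = .Lm :: stepToWord (1, b) := by
  simp [stepToWord, add_comm, List.replicate_succ]

def wordToPath : List PMLetter → List (ℕ × ℕ)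
  | [] => [(1, 0)]
  | .Lu :: w => (1, 0) :: wordToPath w
  | .R :: w => (wordToPath w).modifyHead ((1, 0) + ·)
  | .Lm :: w => (wordToPath w).modifyHead ((0, 1) + ·)

theorem wordToPath_ne_nil (w : List PMLetter) : wordToPath w ≠ [] := by
  induction w with
  | nil => simp [wordToPath]
  | cons x w ih => cases x <;> simp [wordToPath, ih]

theorem one_le_fst_of_mem_wordToPath (w : List PMLetter) : ∀ s ∈ wordToPath w, 1 ≤ s.1 := by
  induction w with
  | nil => simp [wordToPath]
  | cons x w ih =>
    obtain ⟨s, l, hsl⟩ := List.exists_cons_of_ne_nil (wordToPath_ne_nil w)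
    rw [hsl, List.forall_mem_cons] at ih
    cases x <;> simp only [wordToPath, hsl, List.modifyHead_cons, List.forall_mem_cons]
    · exact ⟨le_rfl, ih⟩
    · exact ⟨by simpa using ih.1, ih.2⟩
    · exact ⟨by simp, ih.2⟩

theorem pathEnd_wordToPath (w : List PMLetter) :
    pathEnd (wordToPath w) = (w.length + 1 - w.count .Lm, w.count .Lm) := by
  induction w with
  | nil => rfl
  | cons x w ih =>
    have hcount := w.count_le_length (a := .Lm)
    obtain ⟨s, l, hsl⟩ := List.exists_cons_of_ne_nil (wordToPath_ne_nil w)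
    rw [hsl, pathEnd_cons] at ih
    cases x <;>
      simp only [wordToPath, hsl, List.modifyHead_cons, pathEnd_cons, add_assoc, ih] <;>
      ext <;> simp <;> omega

theorem wordToPath_eq_cons_of_head_ne_R {w : List PMLetter} (hw : ProperlyMarked w)
    (hR : w.head? ≠ some .R) : ∃ b l, wordToPath w = (1, b) :: l := by
  induction w with
  | nil => exact ⟨0, [], rfl⟩
  | cons x w ih =>
    obtain ⟨hLm, hw'⟩ := properlyMarked_cons.1 hw
    cases x with
    | Lu => exact ⟨0, _, rfl⟩
    | R => simp at hR
    | Lm =>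
      obtain ⟨b, l, h⟩ := ih hw' (hLm rfl)
      exact ⟨b + 1, l, by simp [wordToPath, h, add_comm]⟩

theorem pathToWord_wordToPath {w : List PMLetter} (hw : ProperlyMarked w) :
    pathToWord (wordToPath w) = w := by
  induction w with
  | nil => simp [wordToPath, pathToWord, stepToWord]
  | cons x w ih =>
    obtain ⟨hLm, hw'⟩ := properlyMarked_cons.1 hw
    obtain ⟨s, l, hsl⟩ := List.exists_cons_of_ne_nil (wordToPath_ne_nil w)
    cases x with
    | Lu => rw [wordToPath, hsl, pathToWord, ← hsl, ih hw']; rfl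
    | R =>
      have hs : 1 ≤ s.1 := one_le_fst_of_mem_wordToPath w s (by simp [hsl])
      rw [wordToPath, hsl, List.modifyHead_cons,
        pathToWord_cons_of_stepToWord_eq (stepToWord_add_R hs), ← hsl, ih hw']
    | Lm =>
      obtain ⟨b, l, h⟩ := wordToPath_eq_cons_of_head_ne_R hw' (hLm rfl)
      rw [wordToPath, h, List.modifyHead_cons,
        pathToWord_cons_of_stepToWord_eq (stepToWord_add_Lm b), ← h, ih hw']

theorem wordToPath_replicate_append {w : List PMLetter} {t : ℕ × ℕ} {l : List (ℕ × ℕ)}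
    (h : wordToPath w = t :: l) (c b : ℕ) :
    wordToPath (List.replicate c .R ++ (List.replicate b .Lm ++ w)) = ((c, b) + t) :: l := by
  induction c with
  | zero =>
    induction b with
    | zero => simp [h]
    | succ b ih =>
      rw [List.replicate_zero, List.nil_append] at ih ⊢
      rw [List.replicate_succ, List.cons_append, wordToPath, ih, List.modifyHead_cons]
      congr 1
      ext <;> simp
      omega
  | succ c ih =>
    rw [List.replicate_succ, List.cons_append, wordToPath, ih, List.modifyHead_cons]
    congr 1
    ext <;> simp
    omega

theorem wordToPath_stepToWord_append {s : ℕ × ℕ} (hs : 1 ≤ s.1) {w : List PMLetter}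
    {l : List (ℕ × ℕ)} (h : wordToPath w = (1, 0) :: l) :
    wordToPath (stepToWord s ++ w) = s :: l := by
  rw [stepToWord, List.append_assoc, wordToPath_replicate_append h]
  congr 1
  ext <;> simp
  omega

theorem wordToPath_pathToWord : ∀ {l : List (ℕ × ℕ)}, (∀ s ∈ l, 1 ≤ s.1) → l ≠ [] →
    wordToPath (pathToWord l) = l
  | [], _, hne => absurd rfl hne
  | [s], hl, _ => by
    simpa [pathToWord] using wordToPath_stepToWord_append (w := []) (hl s (by simp)) rfl
  | s :: t :: l, hl, _ => wordToPath_stepToWord_append (hl s (by simp))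
      (by rw [wordToPath, wordToPath_pathToWord (fun s hs => hl s (by simp [hs])) (by simp)])

def pmWords (m k : ℕ) : Set (List PMLetter) :=
  {w | w.length = m ∧ ProperlyMarked w ∧ w.count PMLetter.Lm = k}

theorem bijOn_wordToPath (d k : ℕ) :
    Set.BijOn wordToPath (pmWords (d + k) k) (Kimb (d + 1) k) := by
  have hne (l : List (ℕ × ℕ)) (hl : l ∈ Kimb (d + 1) k) : l ≠ [] := by
    rintro rfl
    simp [nil_mem_Kimb] at hl
  refine Set.InvOn.bijOn (f' := pathToWord) ⟨fun w hw => pathToWord_wordToPath hw.2.1,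
    fun l hl => wordToPath_pathToWord hl.1 (hne l hl)⟩ ?_ ?_
  · rintro w ⟨hlen, -, hcount⟩
    refine ⟨one_le_fst_of_mem_wordToPath w, ?_⟩
    rw [pathEnd_wordToPath, hlen, hcount, Prod.ext_iff]
    omega
  · intro l hl
    have hend := pathEnd_wordToPath (pathToWord l)
    rw [wordToPath_pathToWord hl.1 (hne l hl), hl.2, Prod.ext_iff] at hend
    exact ⟨by omega, properlyMarked_pathToWord l, by omega⟩

theorem pm_words_eq_kimberling (n k : ℕ) (hn : 1 ≤ n) (hk : k ≤ n - 1) :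
    Set.ncard {w : List PMLetter | w.length = n - 1 ∧ ProperlyMarked w ∧
        w.count PMLetter.Lm = k} = (Kimb (n - k) k).ncard ∧
    Set.ncard {w : List PMLetter | w.length = n - 1 ∧ ProperlyMarked w ∧
        w.count PMLetter.Lm = k} =
      ∑ r ∈ Finset.range (n - k), Nat.choose (n - k - 1) r * Nat.choose (r + k) r := by
  obtain ⟨d, hd⟩ : ∃ d, n - 1 = d + k := ⟨n - 1 - k, by omega⟩
  have hnk : n - k = d + 1 := by omega
  change (pmWords (n - 1) k).ncard = _ ∧ (pmWords (n - 1) k).ncard = _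
  rw [hd, hnk, Nat.add_sub_cancel, (bijOn_wordToPath d k).ncard_eq, ncard_Kimb]
  exact ⟨rfl, rfl⟩
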